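/- Let A be an N×N real symmetric matrix, let C > 0, and let D = diag(d₁,…,d_N) be a real diagonal matrix with d_{j+1} − d_j > 2‖A‖ + C for all 1 ≤ j ≤ N−1 (operator norm). Then all eigenvalues E₁ < E₂ < … < E_N of A + D are simple, they satisfy |E_j − d_j| ≤ ‖A‖ and E_{j+1} − E_j > C, and the rank-one spectral projection P_j of A + D onto the eigenspace of E_j satisfies ‖P_j − e_j e_j^T‖ ≤ 12‖A‖/(Cπ), where e_j is the j-th standard basis vector. -/

import Mathlib

open Matrix
open scoped RealInnerProductSpace

noncomputable section

/-- Auxiliary: if `∑ gᵢ²vᵢ² ≤ a² ∑ vᵢ²` and `a < |gᵢ|` for all `i`, then `v = 0`. -/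
lemma ddst_aux_zero {n : ℕ} (a : ℝ) (g v : Fin n → ℝ)
    (hg : ∀ i, a < |g i|) (ha : 0 ≤ a)
    (h : ∑ i, (g i)^2 * (v i)^2 ≤ a^2 * ∑ i, (v i)^2) : ∀ i, v i = 0 := by
  have h' : ∑ i, ((g i)^2 - a^2) * (v i)^2 ≤ 0 := by
    have : ∑ i, ((g i)^2 - a^2) * (v i)^2
        = ∑ i, (g i)^2 * (v i)^2 - a^2 * ∑ i, (v i)^2 := by
      rw [Finset.mul_sum, ← Finset.sum_sub_distrib]
      exact Finset.sum_congr rfl fun i _ => by ring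
    linarith
  have hnn : ∀ i ∈ Finset.univ, 0 ≤ ((g i)^2 - a^2) * (v i)^2 := by
    intro i _
    have hlt : a^2 < (g i)^2 := by nlinarith [hg i, abs_nonneg (g i), sq_abs (g i)]
    have h1 : 0 ≤ (g i)^2 - a^2 := by linarith
    positivity
  have hz := Finset.sum_eq_zero_iff_of_nonneg hnn |>.mp
    (le_antisymm h' (Finset.sum_nonneg hnn))
  intro i
  have hi := hz i (Finset.mem_univ i)
  have hgi : a^2 < (g i)^2 := by
    have := hg i
    nlinarith [abs_nonneg (g i), sq_abs (g i), hg i]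
  have : (v i)^2 = 0 := by
    rcases mul_eq_zero.mp hi with h | h
    · exfalso; linarith
    · exact h
  exact pow_eq_zero_iff (two_ne_zero) |>.mp this

set_option maxHeartbeats 2000000 in
/-- STATEMENT 15: a real symmetric matrix plus a diagonal matrix with large gaps has simple
eigenvalues, located near the diagonal entries, keeping the gaps, and with spectral
projections close to the coordinate projections. -/
theorem diagonal_dominant_spectral_theory (N : ℕ) (A : Matrix (Fin N) (Fin N) ℝ)
    (hA : A.IsHermitian) (C : ℝ) (hC : 0 < C) (d : Fin N → ℝ)
    (hgap : ∀ (j : ℕ) (h : j + 1 < N),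
      d ⟨j + 1, h⟩ - d ⟨j, by omega⟩ > 2 * ‖Matrix.toEuclideanCLM (𝕜 := ℝ) A‖ + C) :
    ∃ E : Fin N → ℝ, StrictMono E ∧
      spectrum ℝ (A + Matrix.diagonal d) = Set.range E ∧
      (∀ j : Fin N,
        Module.finrank ℝ
          (Module.End.eigenspace (Matrix.toEuclideanLin (A + Matrix.diagonal d)) (E j)) = 1) ∧
      (∀ j : Fin N, |E j - d j| ≤ ‖Matrix.toEuclideanCLM (𝕜 := ℝ) A‖) ∧
      (∀ (j : ℕ) (h : j + 1 < N), E ⟨j + 1, h⟩ - E ⟨j, by omega⟩ > C) ∧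
      (∀ j : Fin N,
        ‖(Module.End.eigenspace (Matrix.toEuclideanLin (A + Matrix.diagonal d))
              (E j)).subtypeL ∘L
            Submodule.orthogonalProjectionOnto
              (Module.End.eigenspace (Matrix.toEuclideanLin (A + Matrix.diagonal d)) (E j)) -
          Matrix.toEuclideanCLM (𝕜 := ℝ) (Matrix.single j j (1 : ℝ))‖ ≤
          12 * ‖Matrix.toEuclideanCLM (𝕜 := ℝ) A‖ / (C * Real.pi)) := by
  classical
  set a := ‖Matrix.toEuclideanCLM (𝕜 := ℝ) A‖ with ha_def
  have ha : 0 ≤ a := norm_nonneg _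
  set M := A + Matrix.diagonal d with hMdef
  have hM : M.IsHermitian := hA.add (Matrix.isHermitian_diagonal d)
  set T := Matrix.toEuclideanLin M with hTdef
  have hT : T.IsSymmetric := Matrix.isHermitian_iff_isSymmetric.mp hM
  have hrank : Module.finrank ℝ (EuclideanSpace ℝ (Fin N)) = N := finrank_euclideanSpace_fin
  set b := hT.eigenvectorBasis hrank with hb_def
  set μ := hT.eigenvalues hrank with hmu_def
  have hTb : ∀ i, T (b i) = μ i • b i := fun i =>
    (hT.hasEigenvector_eigenvectorBasis hrank i).apply_eq_smul
  -- norms and coordinates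
  have hnorm_sq : ∀ x : EuclideanSpace ℝ (Fin N), ‖x‖^2 = ∑ i, (x i)^2 := by
    intro x
    rw [EuclideanSpace.norm_eq, Real.sq_sqrt (by positivity)]
    simp [Real.norm_eq_abs, sq_abs]
  have hcoord : ∀ (x : EuclideanSpace ℝ (Fin N)) (i : Fin N), T x i = M.mulVec x i :=
    fun x i => rfl
  have hAcoord : ∀ (x : EuclideanSpace ℝ (Fin N)) (i : Fin N),
      Matrix.toEuclideanCLM (𝕜 := ℝ) A x i = A.mulVec x i := fun x i => rfl
  have hMmul : ∀ (x : EuclideanSpace ℝ (Fin N)) (i : Fin N),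
      M.mulVec x i = A.mulVec x i + d i * x i := by
    intro x i
    rw [hMdef, Matrix.add_mulVec]
    simp [Matrix.mulVec_diagonal]
  -- Parseval
  have hpars : ∀ x : EuclideanSpace ℝ (Fin N), ∑ i, ⟪b i, x⟫^2 = ‖x‖^2 := by
    intro x
    have h1 : ‖b.repr x‖^2 = ‖x‖^2 := by rw [b.repr.norm_map]
    rw [← h1, hnorm_sq]
    exact Finset.sum_congr rfl fun i _ => by rw [b.repr_apply_apply]
  have hinnerT : ∀ (x : EuclideanSpace ℝ (Fin N)) (i : Fin N),
      ⟪b i, T x⟫ = μ i * ⟪b i, x⟫ := by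
    intro x i
    rw [← hT (b i) x, hTb i, real_inner_smul_left]
  -- telescoped gaps
  have haC : 0 < 2 * a + C := by linarith
  have hd : ∀ j k : Fin N, j < k → d k - d j > 2 * a + C := by
    have key : ∀ m : ℕ, ∀ j k : Fin N, (k : ℕ) = (j : ℕ) + m + 1 → d k - d j > 2 * a + C := by
      intro m
      induction m with
      | zero =>
        intro j k hk
        have h1 : (j : ℕ) + 1 < N := hk ▸ k.isLt
        have h2 := hgap j.val h1
        have hkk : k = ⟨(j : ℕ) + 1, h1⟩ := Fin.ext (by simp [hk])
        have hjj : (⟨(j : ℕ), by omega⟩ : Fin N) = j := Fin.ext rfl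
        rw [hjj] at h2
        rw [hkk]
        exact h2
      | succ m ih =>
        intro j k hk
        have hk' : (j : ℕ) + m + 1 < N := by have := k.isLt; omega
        set k' : Fin N := ⟨(j : ℕ) + m + 1, hk'⟩ with hk'def
        have h1 := ih j k' rfl
        have h2 : (j : ℕ) + m + 1 + 1 < N := by have := k.isLt; omega
        have h3 := hgap ((j : ℕ) + m + 1) h2
        have hkk : k = ⟨(j : ℕ) + m + 1 + 1, h2⟩ := Fin.ext (by simp [hk]; omega)
        have hkk' : (⟨(j : ℕ) + m + 1, by omega⟩ : Fin N) = k' := Fin.ext rfl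
        rw [hkk', hk'def] at h3
        rw [hkk]
        have := haC
        linarith
    intro j k hlt
    exact key ((k : ℕ) - (j : ℕ) - 1) j k (by have : (j:ℕ) < (k:ℕ) := hlt; omega)
  -- Step A: every eigenvalue is near some d j
  have stepA : ∀ i, ∃ j, |μ i - d j| ≤ a := by
    intro i
    by_contra hcon
    push_neg at hcon
    set v : EuclideanSpace ℝ (Fin N) := b i with hvdef
    have hv1 : ‖v‖ = 1 := b.orthonormal.1 i
    have heig : ∀ k, A.mulVec v k = (μ i - d k) * v k := by
      intro k
      have h1 : T v k = μ i * v k := by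
        rw [hTb i]
        simp [PiLp.smul_apply, hvdef]
      rw [hcoord, hMmul] at h1
      linarith
    have hnA : ∑ k, (μ i - d k)^2 * (v k)^2 ≤ a^2 * ∑ k, (v k)^2 := by
      have h1 : ‖Matrix.toEuclideanCLM (𝕜 := ℝ) A v‖ ≤ a * ‖v‖ :=
        (Matrix.toEuclideanCLM (𝕜 := ℝ) A).le_opNorm v
      have h2 : ‖Matrix.toEuclideanCLM (𝕜 := ℝ) A v‖^2 ≤ a^2 * ‖v‖^2 := by
        nlinarith [norm_nonneg (Matrix.toEuclideanCLM (𝕜 := ℝ) A v), norm_nonneg v]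
      calc ∑ k, (μ i - d k)^2 * (v k)^2
          = ∑ k, (Matrix.toEuclideanCLM (𝕜 := ℝ) A v k)^2 := by
            refine Finset.sum_congr rfl fun k _ => ?_
            rw [hAcoord, heig k]; ring
        _ = ‖Matrix.toEuclideanCLM (𝕜 := ℝ) A v‖^2 := (hnorm_sq _).symm
        _ ≤ a^2 * ‖v‖^2 := h2
        _ = a^2 * ∑ k, (v k)^2 := by rw [hnorm_sq]
    have hzero := ddst_aux_zero a (fun k => μ i - d k) (fun k => v k) hcon ha hnA
    have : ‖v‖^2 = 0 := by
      rw [hnorm_sq]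
      exact Finset.sum_eq_zero fun k _ => by have := hzero k; simp only at this; rw [this]; ring
    rw [hv1] at this; norm_num at this
  -- Step B: near every d j there is an eigenvalue
  have stepB : ∀ j, ∃ i, |μ i - d j| ≤ a := by
    intro j
    by_contra hcon
    push_neg at hcon
    set e : EuclideanSpace ℝ (Fin N) := EuclideanSpace.single j (1 : ℝ) with hedef
    have he : ‖e‖ = 1 := by rw [hedef, EuclideanSpace.norm_single]; norm_num
    set c : Fin N → ℝ := fun i => ⟪b i, e⟫ with hcdef
    set y : EuclideanSpace ℝ (Fin N) := Matrix.toEuclideanCLM (𝕜 := ℝ) A e with hydef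
    have h1 : ∀ k, y k = T e k - d j * e k := by
      intro k
      rw [hcoord, hMmul, hydef, hAcoord]
      have hek : e k = if k = j then 1 else 0 := by
        rw [hedef]; simp [EuclideanSpace.single_apply]
      by_cases hkj : k = j
      · subst hkj; simp [hek]
      · simp [hek, hkj]
    have hy : ∀ i, ⟪b i, y⟫ = (μ i - d j) * c i := by
      intro i
      have h2 : y = T e - d j • e := by
        apply PiLp.ext
        intro k
        rw [h1 k]
        simp [PiLp.sub_apply, PiLp.smul_apply]
      rw [h2, inner_sub_right, hinnerT, real_inner_smul_right, hcdef]
      ring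
    have hsum : ∑ i, (μ i - d j)^2 * (c i)^2 ≤ a^2 * ∑ i, (c i)^2 := by
      have h3 : ‖y‖ ≤ a * ‖e‖ := (Matrix.toEuclideanCLM (𝕜 := ℝ) A).le_opNorm e
      have h4 : ‖y‖^2 ≤ a^2 * ‖e‖^2 := by
        nlinarith [norm_nonneg y, norm_nonneg e]
      calc ∑ i, (μ i - d j)^2 * (c i)^2
          = ∑ i, ⟪b i, y⟫^2 := by
            refine Finset.sum_congr rfl fun i _ => ?_
            rw [hy i]; ring
        _ = ‖y‖^2 := hpars y
        _ ≤ a^2 * ‖e‖^2 := h4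
        _ = a^2 * ∑ i, (c i)^2 := by rw [← hpars e]
    have hzero := ddst_aux_zero a (fun i => μ i - d j) c hcon ha hsum
    have h5 : (1 : ℝ) = 0 := by
      have h6 : ∑ i, (c i)^2 = ‖e‖^2 := hpars e
      rw [he] at h6
      have h7 : ∑ i, (c i)^2 = 0 :=
        Finset.sum_eq_zero fun i _ => by rw [hzero i]; ring
      rw [h7] at h6; norm_num at h6
    norm_num at h5
  -- disjointness
  have hdisj : ∀ (x : ℝ) (j k : Fin N), |x - d j| ≤ a → |x - d k| ≤ a → j = k := by
    intro x j k hj hk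
    by_contra hne
    have hj' := abs_le.mp hj
    have hk' := abs_le.mp hk
    rcases lt_or_gt_of_ne hne with h | h
    · have := hd j k h; linarith [hj'.1, hj'.2, hk'.1, hk'.2]
    · have := hd k j h; linarith [hj'.1, hj'.2, hk'.1, hk'.2]
  -- the interval assignment
  set g : Fin N → Fin N := fun i => Classical.choose (stepA i) with hgdef
  have hgspec : ∀ i, |μ i - d (g i)| ≤ a := fun i => Classical.choose_spec (stepA i)
  have hgsurj : Function.Surjective g := by
    intro j
    obtain ⟨i, hi⟩ := stepB j
    exact ⟨i, (hdisj (μ i) (g i) j (hgspec i) hi)⟩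
  have hgbij : Function.Bijective g := Finite.surjective_iff_bijective.mp hgsurj
  have hmuinj : Function.Injective μ := by
    intro i i' h
    apply hgbij.1
    exact hdisj (μ i) (g i) (g i') (hgspec i) (by rw [h]; exact hgspec i')
  set σ : Fin N ≃ Fin N := Equiv.ofBijective g hgbij with hσdef
  set E : Fin N → ℝ := fun j => μ (σ.symm j) with hEdef
  have hgE : ∀ j, g (σ.symm j) = j := fun j => σ.apply_symm_apply j
  have hEd : ∀ j, |E j - d j| ≤ a := by
    intro j
    have h1 := hgspec (σ.symm j)
    rwa [hgE j] at h1
  have hEmono : StrictMono E := by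
    intro j k hjk
    have h1 := abs_le.mp (hEd j)
    have h2 := abs_le.mp (hEd k)
    have h3 := hd j k hjk
    have : E j < E k := by linarith [h1.1, h1.2, h2.1, h2.2]
    exact this
  -- the range of E is the range of μ
  have hrangeE : Set.range E = Set.range μ := by
    ext x
    constructor
    · rintro ⟨j, rfl⟩; exact ⟨σ.symm j, rfl⟩
    · rintro ⟨i, rfl⟩
      refine ⟨σ i, ?_⟩
      rw [hEdef]; simp
  -- eigenvalue extraction
  have hvzero : ∀ v : EuclideanSpace ℝ (Fin N), (∀ i, ⟪b i, v⟫ = 0) → v = 0 := by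
    intro v hv
    have h1 : ‖v‖^2 = 0 := by
      rw [← hpars v]
      exact Finset.sum_eq_zero fun i _ => by rw [hv i]; ring
    have h2 : ‖v‖ = 0 := by
      have := sq_eq_zero_iff.mp h1
      exact this
    exact norm_eq_zero.mp h2
  have heigrange : ∀ x : ℝ, Module.End.HasEigenvalue T x → ∃ i, μ i = x := by
    intro x hx
    obtain ⟨v, hv⟩ := hx.exists_hasEigenvector
    by_contra hcon
    push_neg at hcon
    apply hv.2
    apply hvzero
    intro i
    have h1 : ⟪b i, T v⟫ = μ i * ⟪b i, v⟫ := hinnerT v i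
    have h2 : ⟪b i, T v⟫ = x * ⟪b i, v⟫ := by
      rw [hv.apply_eq_smul, real_inner_smul_right]
    have h3 : (μ i - x) * ⟪b i, v⟫ = 0 := by rw [sub_mul]; linarith
    rcases mul_eq_zero.mp h3 with h | h
    · exact absurd (by linarith : μ i = x) (hcon i)
    · exact h
  have hspec : spectrum ℝ M = Set.range E := by
    rw [hrangeE, ← Matrix.spectrum_toEuclideanLin (A := M) (𝕜 := ℝ)]
    ext x
    rw [show Matrix.toEuclideanLin M = T from rfl,
      ← Module.End.hasEigenvalue_iff_mem_spectrum]
    constructor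
    · intro hx
      obtain ⟨i, hi⟩ := heigrange x hx
      exact ⟨i, hi⟩
    · rintro ⟨i, rfl⟩
      exact Module.End.hasEigenvalue_of_hasEigenvector (hT.hasEigenvector_eigenvectorBasis hrank i)
  -- eigenspaces are lines
  have hES : ∀ j, Module.End.eigenspace T (E j) = (ℝ ∙ (b (σ.symm j))) := by
    intro j
    apply le_antisymm
    · intro v hv
      have hv' : T v = E j • v := Module.End.mem_eigenspace_iff.mp hv
      have hcoef : ∀ i, i ≠ σ.symm j → ⟪b i, v⟫ = 0 := by
        intro i hi
        have h1 : ⟪b i, T v⟫ = μ i * ⟪b i, v⟫ := hinnerT v i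
        have h2 : ⟪b i, T v⟫ = E j * ⟪b i, v⟫ := by
          rw [hv', real_inner_smul_right]
        have h3 : μ i ≠ E j := fun hc => hi (hmuinj hc)
        have h4 : (μ i - E j) * ⟪b i, v⟫ = 0 := by rw [sub_mul]; linarith
        rcases mul_eq_zero.mp h4 with h | h
        · exact absurd (by linarith : μ i = E j) h3
        · exact h
      have hv2 : v = ⟪b (σ.symm j), v⟫ • b (σ.symm j) := by
        conv_lhs => rw [← b.sum_repr' v]
        rw [Finset.sum_eq_single (σ.symm j)]
        · intro i _ hi
          rw [hcoef i hi, zero_smul]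
        · intro h; exact absurd (Finset.mem_univ _) h
      rw [hv2]
      exact Submodule.smul_mem _ _ (Submodule.mem_span_singleton_self _)
    · rw [Submodule.span_singleton_le_iff_mem]
      exact Module.End.mem_eigenspace_iff.mpr (hTb (σ.symm j))
  have hbne : ∀ i : Fin N, b i ≠ 0 := fun i => by
    intro h
    have := b.orthonormal.1 i
    rw [h] at this; simp at this
  refine ⟨E, hEmono, hspec, ?_, hEd, ?_, ?_⟩
  · intro j
    rw [hES j]
    exact finrank_span_singleton (hbne _)
  · intro j h
    have h1 := abs_le.mp (hEd ⟨j + 1, h⟩)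
    have h2 := abs_le.mp (hEd ⟨j, by omega⟩)
    have h3 := hgap j h
    linarith [h1.1, h1.2, h2.1, h2.2]
  · intro j
    set i₀ := σ.symm j with hi0
    set v₀ : EuclideanSpace ℝ (Fin N) := b i₀ with hv0
    set u : EuclideanSpace ℝ (Fin N) := if 0 ≤ v₀ j then v₀ else -v₀ with hudef
    have hv0n : ‖v₀‖ = 1 := b.orthonormal.1 i₀
    have hu1 : ‖u‖ = 1 := by
      rw [hudef]; split_ifs <;> simp [hv0n]
    have hTu : T u = E j • u := by
      rw [hudef]; split_ifs
      · exact hTb i₀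
      · rw [map_neg, hTb i₀, smul_neg]
    have huj : 0 ≤ u j := by
      rw [hudef]; split_ifs with h
      · exact h
      · have h1 : v₀ j < 0 := lt_of_not_ge h
        have h2 : (-v₀ : EuclideanSpace ℝ (Fin N)) j = -(v₀ j) := rfl
        rw [h2]; linarith
    have hspanu : Module.End.eigenspace T (E j) = (ℝ ∙ u) := by
      rw [hES j, ← hv0, hudef]
      split_ifs
      · rfl
      · have h3 : -v₀ = (-1 : ℝ) • v₀ := by rw [neg_smul, one_smul]
        rw [h3, Submodule.span_singleton_smul_eq (by simp : IsUnit (-1 : ℝ)) v₀]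
    set K := Module.End.eigenspace T (E j) with hK
    -- projection formula
    have hPx : ∀ x : EuclideanSpace ℝ (Fin N),
        (K.subtypeL ∘L K.orthogonalProjectionOnto) x = ⟪u, x⟫ • u := by
      intro x
      have huu : ⟪u, u⟫ = (1 : ℝ) := by
        rw [real_inner_self_eq_norm_sq, hu1]; norm_num
      have hm : ⟪u, x⟫ • u ∈ K := by
        rw [hspanu]
        exact Submodule.smul_mem _ _ (Submodule.mem_span_singleton_self u)
      have horth : ∀ w ∈ K, ⟪x - ⟪u, x⟫ • u, w⟫ = 0 := by
        intro w hw
        rw [hspanu] at hw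
        obtain ⟨c, rfl⟩ := Submodule.mem_span_singleton.mp hw
        rw [inner_sub_left, real_inner_smul_left, real_inner_smul_right,
          real_inner_smul_right, huu, real_inner_comm x u]
        ring
      have h4 := Submodule.eq_starProjection_of_mem_of_inner_eq_zero hm horth
      rw [ContinuousLinearMap.comp_apply, Submodule.subtypeL_apply]
      exact h4
    set e : EuclideanSpace ℝ (Fin N) := EuclideanSpace.single j (1 : ℝ) with hedef
    have he1 : ‖e‖ = 1 := by rw [hedef, EuclideanSpace.norm_single]; norm_num
    have hQx : ∀ x : EuclideanSpace ℝ (Fin N),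
        Matrix.toEuclideanCLM (𝕜 := ℝ) (Matrix.single j j (1 : ℝ)) x = ⟪e, x⟫ • e := by
      intro x
      apply PiLp.ext
      intro k
      have hl : Matrix.toEuclideanCLM (𝕜 := ℝ) (Matrix.single j j (1 : ℝ)) x k
          = ((Matrix.single j j (1 : ℝ)).mulVec x) k := rfl
      have hinner : ⟪e, x⟫ = x j := by
        rw [hedef, EuclideanSpace.inner_single_left]; simp
      have hr : (⟪e, x⟫ • e) k = x j * (if k = j then 1 else 0) := by
        rw [PiLp.smul_apply, hinner, hedef, smul_eq_mul]
        simp [EuclideanSpace.single_apply]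
      rw [hl, hr]
      rw [Matrix.mulVec]
      simp only [Matrix.single, Matrix.of_apply, dotProduct]
      rw [Finset.sum_eq_single j]
      · by_cases hkj : k = j
        · simp [hkj]
        · have hjk : ¬(j = k) := fun h => hkj h.symm
          simp [hkj, hjk]
      · intro l _ hl'
        have hjl : ¬(j = l) := fun h => hl' h.symm
        simp [hjl]
      · intro h; exact absurd (Finset.mem_univ _) h
    -- eigen-equation in coordinates
    have hucoord : ∀ i, A.mulVec u i = (E j - d i) * u i := by
      intro i
      have h1 : T u i = E j * u i := by
        rw [hTu]; simp [PiLp.smul_apply]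
      rw [hcoord, hMmul] at h1; linarith
    have hEgap2 : ∀ i : Fin N, i ≠ j → C^2 ≤ (E j - d i)^2 := by
      intro i hi
      have h1 := abs_le.mp (hEd j)
      have h5 : C ≤ |E j - d i| := by
        rcases lt_or_gt_of_ne hi with h | h
        · have h2 := hd i j h
          exact le_abs.mpr (Or.inl (by linarith [h1.1, h1.2]))
        · have h2 := hd j i h
          exact le_abs.mpr (Or.inr (by linarith [h1.1, h1.2]))
      calc C^2 ≤ |E j - d i|^2 := by nlinarith [abs_nonneg (E j - d i)]
        _ = (E j - d i)^2 := sq_abs _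
    have hsum1 : ∑ i, (u i)^2 = 1 := by
      rw [← hnorm_sq, hu1]; norm_num
    set s2 : ℝ := ∑ i ∈ Finset.univ.erase j, (u i)^2 with hs2def
    have hs2nn : 0 ≤ s2 := Finset.sum_nonneg fun i _ => sq_nonneg _
    have hoff : C^2 * s2 ≤ a^2 := by
      have h1 : ∀ i ∈ Finset.univ.erase j, C^2 * (u i)^2 ≤ (A.mulVec u i)^2 := by
        intro i hi
        have hine : i ≠ j := Finset.ne_of_mem_erase hi
        rw [hucoord i]
        have h2 := hEgap2 i hine
        nlinarith [sq_nonneg (u i)]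
      calc C^2 * s2 = ∑ i ∈ Finset.univ.erase j, C^2 * (u i)^2 := by
            rw [hs2def, Finset.mul_sum]
        _ ≤ ∑ i ∈ Finset.univ.erase j, (A.mulVec u i)^2 := Finset.sum_le_sum h1
        _ ≤ ∑ i, (A.mulVec u i)^2 :=
            Finset.sum_le_sum_of_subset_of_nonneg (Finset.erase_subset _ _)
              (fun i _ _ => sq_nonneg _)
        _ = ‖Matrix.toEuclideanCLM (𝕜 := ℝ) A u‖^2 := by
            rw [hnorm_sq]
            exact Finset.sum_congr rfl fun i _ => by rw [hAcoord]
        _ ≤ a^2 := by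
            have h3 : ‖Matrix.toEuclideanCLM (𝕜 := ℝ) A u‖ ≤ a * ‖u‖ :=
              (Matrix.toEuclideanCLM (𝕜 := ℝ) A).le_opNorm u
            rw [hu1] at h3
            nlinarith [norm_nonneg (Matrix.toEuclideanCLM (𝕜 := ℝ) A u)]
    have hsplit : (u j)^2 + s2 = 1 := by
      rw [hs2def, ← hsum1]
      exact Finset.add_sum_erase Finset.univ (fun i => (u i)^2) (Finset.mem_univ j)
    have hujle : u j ≤ 1 := by nlinarith
    have hujge : 1 - u j ≤ s2 := by
      nlinarith [mul_nonneg huj (sub_nonneg.mpr hujle)]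
    have hue : ‖u - e‖^2 = 2 - 2 * (u j) := by
      have hinn : ⟪u, e⟫ = u j := by
        rw [hedef, EuclideanSpace.inner_single_right]; simp
      rw [norm_sub_sq_real, hu1, he1, hinn]; ring
    have hueC : C^2 * ‖u - e‖^2 ≤ 2 * a^2 := by
      rw [hue]
      nlinarith [hoff, hujge, sq_nonneg C]
    -- operator norm bound
    have hPQ : ∀ x, ((K.subtypeL ∘L K.orthogonalProjectionOnto)
        - Matrix.toEuclideanCLM (𝕜 := ℝ) (Matrix.single j j (1 : ℝ))) x
        = ⟪u - e, x⟫ • u + ⟪e, x⟫ • (u - e) := by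
      intro x
      rw [ContinuousLinearMap.sub_apply, hPx x, hQx x, inner_sub_left, sub_smul, smul_sub]
      abel
    have hopnorm : ‖(K.subtypeL ∘L K.orthogonalProjectionOnto)
        - Matrix.toEuclideanCLM (𝕜 := ℝ) (Matrix.single j j (1 : ℝ))‖
        ≤ 2 * ‖u - e‖ := by
      apply ContinuousLinearMap.opNorm_le_bound _ (by positivity)
      intro x
      rw [hPQ x]
      have l1 : ‖⟪u - e, x⟫ • u‖ ≤ ‖u - e‖ * ‖x‖ := by
        rw [norm_smul, Real.norm_eq_abs, hu1, mul_one]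
        exact abs_real_inner_le_norm _ _
      have l2 : ‖⟪e, x⟫ • (u - e)‖ ≤ ‖x‖ * ‖u - e‖ := by
        rw [norm_smul, Real.norm_eq_abs]
        have := abs_real_inner_le_norm e x
        rw [he1, one_mul] at this
        exact mul_le_mul_of_nonneg_right this (norm_nonneg _)
      calc ‖⟪u - e, x⟫ • u + ⟪e, x⟫ • (u - e)‖
          ≤ ‖⟪u - e, x⟫ • u‖ + ‖⟪e, x⟫ • (u - e)‖ := norm_add_le _ _
        _ ≤ ‖u - e‖ * ‖x‖ + ‖x‖ * ‖u - e‖ := add_le_add l1 l2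
        _ = 2 * ‖u - e‖ * ‖x‖ := by ring
    have hfinal : 2 * ‖u - e‖ ≤ 12 * a / (C * Real.pi) := by
      have hsqrt2 : Real.sqrt 2 ≤ 1.5 := by
        rw [show (1.5 : ℝ) = Real.sqrt (1.5 ^ 2) from (Real.sqrt_sq (by norm_num)).symm]
        exact Real.sqrt_le_sqrt (by norm_num)
      have hpi : Real.pi ≤ 4 := Real.pi_le_four
      have hpip : 0 < Real.pi := Real.pi_pos
      have h1 : C * ‖u - e‖ ≤ Real.sqrt 2 * a := by
        have hss : (Real.sqrt 2)^2 = 2 := Real.sq_sqrt (by norm_num)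
        have h2 : (C * ‖u - e‖)^2 ≤ (Real.sqrt 2 * a)^2 := by nlinarith [hueC]
        have h3 : (0 : ℝ) ≤ C * ‖u - e‖ := by positivity
        have h4 := Real.sqrt_le_sqrt h2
        rwa [Real.sqrt_sq h3, Real.sqrt_sq (by positivity)] at h4
      have h5 : C * ‖u - e‖ ≤ 1.5 * a := by nlinarith [mul_le_mul_of_nonneg_right hsqrt2 ha]
      rw [le_div_iff₀ (by positivity : (0 : ℝ) < C * Real.pi)]
      nlinarith [mul_le_mul_of_nonneg_left h5 (by positivity : (0 : ℝ) ≤ 2 * Real.pi),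
        mul_nonneg (sub_nonneg.mpr hpi) ha, norm_nonneg (u - e)]
    exact le_trans hopnorm hfinal
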